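/- For every N ≥ 1, every n ≥ 1, every α ∈ O(A)^(n), and all tuples i, j ∈ {1,…,N}^{n−1}, the following identity holds in O(Rep_N(A)): (π(α))_{ij} = Σ_{s=1}^N α_{(s,i_1,…,i_{n−1}),(s,j_1,…,j_{n−1})}. -/

import Mathlib

noncomputable section

set_option maxHeartbeats 1000000
set_option synthInstance.maxHeartbeats 100000

open TensorProduct PiTensorProduct Equiv Function

variable (k : Type*) [Field k]
variable (A : Type*) [Ring A] [Algebra k A]

/-- The commutator subspace `[A,A] ⊆ A`. -/
def commSM : Submodule k A := Submodule.span k {x : A | ∃ a b : A, x = a * b - b * a}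

/-- `A_♮ = A/[A,A]`. -/
abbrev Anat := A ⧸ commSM k A

/-- The quotient map `A → A_♮`. -/
def qNat : A →ₗ[k] Anat k A := (commSM k A).mkQ

/-- The symmetrizing relation on the tensor algebra of `A_♮`. -/
def symRel : TensorAlgebra k (Anat k A) → TensorAlgebra k (Anat k A) → Prop :=
  fun u v => ∃ x y : TensorAlgebra k (Anat k A), u = x * y ∧ v = y * x

/-- The symmetric algebra `Sym(A_♮)`, realized as the quotient of the tensor algebra of `A_♮`
by the relations `xy = yx`. -/
abbrev SymA := RingQuot (symRel k A)

/-- The canonical inclusion `A_♮ → Sym(A_♮)`. -/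
def iotaSym : Anat k A →ₗ[k] SymA k A :=
  (RingQuot.mkAlgHom k (symRel k A)).toLinearMap ∘ₗ TensorAlgebra.ι k

/-- Tensor powers of `A`. -/
abbrev TP (n : ℕ) := PiTensorProduct k (fun _ : Fin n => A)

/-- The group algebra `k[S(n)]`, as the free `k`-module on `S(n)`. -/
abbrev GrpAlg (n : ℕ) := Equiv.Perm (Fin n) →₀ k

/-- The `n`-th graded component `O(A)^{(n)} = A^{⊗n} ⊗ Sym(A_♮) ⊗ k[S(n)]`. -/
abbrev OO (n : ℕ) := (TP k A n ⊗[k] SymA k A) ⊗[k] GrpAlg k n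

/-- The pure element `(a_1 ⊗ ⋯ ⊗ a_n) ⊗ f ⊗ u` of `O(A)^{(n)}`. -/
def el {n : ℕ} (a : Fin n → A) (f : SymA k A) (u : Equiv.Perm (Fin n)) : OO k A n :=
  (tprod k a ⊗ₜ[k] f) ⊗ₜ[k] Finsupp.single u 1

/-- Build a linear map out of `O(A)^{(n)}` from a family of linear maps on
`A^{⊗n} ⊗ Sym(A_♮)` indexed by permutations. -/
def build {n : ℕ} {M : Type*} [AddCommMonoid M] [Module k M]
    (F : Equiv.Perm (Fin n) → ((TP k A n ⊗[k] SymA k A) →ₗ[k] M)) :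
    OO k A n →ₗ[k] M :=
  TensorProduct.lift
    ((Finsupp.lift ((TP k A n ⊗[k] SymA k A) →ₗ[k] M) k (Equiv.Perm (Fin n)) F).flip)

/-- Splitting off the first tensor factor. -/
def splitFirst (M : Type*) [AddCommGroup M] [Module k M] (n : ℕ) :
    PiTensorProduct k (fun _ : Fin (n+1) => M) ≃ₗ[k]
      M ⊗[k] PiTensorProduct k (fun _ : Fin n => M) :=
  (PiTensorProduct.reindex k (fun _ : Fin (n+1) => M)
      ((finSumFinEquiv.trans (finCongr (by omega : 1 + n = n + 1))).symm :
        Fin (n+1) ≃ (Fin 1 ⊕ Fin n))).trans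
    ((PiTensorProduct.tmulEquiv k M).symm.trans
      (TensorProduct.congr (PiTensorProduct.subsingletonEquiv (0 : Fin 1))
        (LinearEquiv.refl k _)))

/-- Left multiplication into the `s`-th factor of a tensor power of `A`:
`a₀ ⊗ (b_1 ⊗ ⋯ ⊗ b_n) ↦ b_1 ⊗ ⋯ ⊗ (a₀ * b_s) ⊗ ⋯ ⊗ b_n`. -/
def mulInto : ∀ {n : ℕ}, Fin n → (A ⊗[k] TP k A n →ₗ[k] TP k A n)
  | 0, s => s.elim0
  | (m+1), s =>
    (PiTensorProduct.reindex k (fun _ : Fin (m+1) => A)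
        (((Fin.cycleRange s)⁻¹ : Equiv.Perm (Fin (m+1))) : Fin (m+1) ≃ Fin (m+1))).toLinearMap ∘ₗ
    (splitFirst k A m).symm.toLinearMap ∘ₗ
    LinearMap.rTensor (TP k A m) (LinearMap.mul' k A) ∘ₗ
    (TensorProduct.assoc k A A (TP k A m)).symm.toLinearMap ∘ₗ
    LinearMap.lTensor A
      (((PiTensorProduct.reindex k (fun _ : Fin (m+1) => A)
        ((Fin.cycleRange s : Equiv.Perm (Fin (m+1))) : Fin (m+1) ≃ Fin (m+1))).trans
        (splitFirst k A m)).toLinearMap)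

/-- The embedding `S(n) → S(n+1)`, `w ↦ id_1 × w`. -/
def embedSucc {n : ℕ} (w : Equiv.Perm (Fin n)) : Equiv.Perm (Fin (n + 1)) :=
  ((finSuccEquiv n).symm).permCongr (Equiv.optionCongr w)

/-- The canonical projection `S(n+1) → S(n)`, `u ↦ u_*`. -/
def projSucc {n : ℕ} (u : Equiv.Perm (Fin (n + 1))) : Equiv.Perm (Fin n) :=
  Equiv.removeNone (((finSuccEquiv n).symm.trans u).trans (finSuccEquiv n))

/-- Multiplication `A ⊗ Sym(A_♮) → Sym(A_♮)`, `a ⊗ f ↦ ā · f`. -/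
def mulSym : A ⊗[k] SymA k A →ₗ[k] SymA k A :=
  LinearMap.mul' k (SymA k A) ∘ₗ
    LinearMap.rTensor (SymA k A) (iotaSym k A ∘ₗ qNat k A)

/-- Tensoring with a fixed group-algebra basis vector: `x ↦ x ⊗ u`. -/
def withPerm {n : ℕ} (u : Equiv.Perm (Fin n)) :
    (TP k A n ⊗[k] SymA k A) →ₗ[k] OO k A n :=
  (TensorProduct.mk k (TP k A n ⊗[k] SymA k A) (GrpAlg k n)).flip (Finsupp.single u 1)

/-- The case `u(1) = 1` of `π`. -/
def piCaseOne {n : ℕ} (u : Equiv.Perm (Fin (n+1))) :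
    (TP k A (n+1) ⊗[k] SymA k A) →ₗ[k] OO k A n :=
  withPerm k A (projSucc u) ∘ₗ
  LinearMap.lTensor (TP k A n) (mulSym k A) ∘ₗ
  (TensorProduct.leftComm k A (TP k A n) (SymA k A)).toLinearMap ∘ₗ
  (TensorProduct.assoc k A (TP k A n) (SymA k A)).toLinearMap ∘ₗ
  LinearMap.rTensor (SymA k A) (splitFirst k A n).toLinearMap

/-- The case `u(1) = s > 1` of `π`. -/
def piCaseTwo {n : ℕ} (u : Equiv.Perm (Fin (n+1))) (h : u 0 ≠ 0) :
    (TP k A (n+1) ⊗[k] SymA k A) →ₗ[k] OO k A n :=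
  withPerm k A (projSucc u) ∘ₗ
  LinearMap.rTensor (SymA k A) (mulInto k A ((u 0).pred h)) ∘ₗ
  LinearMap.rTensor (SymA k A) (splitFirst k A n).toLinearMap

/-- The map `π : O(A)^{(n+1)} → O(A)^{(n)}`. -/
def piMap {n : ℕ} : OO k A (n+1) →ₗ[k] OO k A n :=
  build k A (fun u => if h : u 0 = 0 then piCaseOne k A u else piCaseTwo k A u h)

/-- Prepending a tensor factor `1`. -/
def consOne {n : ℕ} : TP k A n →ₗ[k] TP k A (n+1) :=
  (splitFirst k A n).symm.toLinearMap ∘ₗ TensorProduct.mk k A (TP k A n) 1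

/-- The map `1̂ : O(A)^{(n)} → O(A)^{(n+1)}`. -/
def oneHat {n : ℕ} : OO k A n →ₗ[k] OO k A (n+1) :=
  build k A (fun u =>
    withPerm k A (embedSucc u) ∘ₗ LinearMap.rTensor (SymA k A) (consOne k A))

/-- The left action of `σ ∈ S(n)` on `O(A)^{(n)}`:
`σ·((a_1⊗…⊗a_n)⊗f⊗τ) = (a_{σ⁻¹(1)}⊗…⊗a_{σ⁻¹(n)})⊗f⊗(στ)`. -/
def lAct {n : ℕ} (σ : Equiv.Perm (Fin n)) : OO k A n →ₗ[k] OO k A n :=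
  build k A (fun u =>
    withPerm k A (σ * u) ∘ₗ
      LinearMap.rTensor (SymA k A)
        (PiTensorProduct.reindex k (fun _ : Fin n => A)
          (σ : Fin n ≃ Fin n)).toLinearMap)

/-- The right action of `σ ∈ S(n)` on `O(A)^{(n)}`:
`((a_1⊗…⊗a_n)⊗f⊗τ)·σ = (a_1⊗…⊗a_n)⊗f⊗(τσ)`. -/
def rAct {n : ℕ} (σ : Equiv.Perm (Fin n)) : OO k A n →ₗ[k] OO k A n :=
  LinearMap.lTensor (TP k A n ⊗[k] SymA k A)
    (Finsupp.lmapDomain k k (fun u : Equiv.Perm (Fin n) => u * σ))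

end

noncomputable section

set_option maxHeartbeats 1000000
set_option synthInstance.maxHeartbeats 400000

open MvPolynomial

variable (k : Type*) [Field k]
variable (A : Type*) [Ring A] [Algebra k A]
variable (N : ℕ)

def repRel : Set (MvPolynomial (A × Fin N × Fin N) k) :=
  {p | (∃ (a b : A) (i j : Fin N), p = X (a + b, i, j) - X (a, i, j) - X (b, i, j)) ∨
       (∃ (c : k) (a : A) (i j : Fin N), p = X (c • a, i, j) - MvPolynomial.C c * X (a, i, j)) ∨
       (∃ (a b : A) (i j : Fin N),
          p = X (a * b, i, j) - ∑ s : Fin N, X (a, i, s) * X (b, s, j)) ∨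
       (∃ i j : Fin N, p = X ((1 : A), i, j) - if i = j then 1 else 0)}

def RepAlg := MvPolynomial (A × Fin N × Fin N) k ⧸ Ideal.span (repRel k A N)

instance : CommRing (RepAlg k A N) :=
  inferInstanceAs (CommRing (MvPolynomial (A × Fin N × Fin N) k ⧸ Ideal.span (repRel k A N)))

instance : Algebra k (RepAlg k A N) :=
  inferInstanceAs (Algebra k (MvPolynomial (A × Fin N × Fin N) k ⧸ Ideal.span (repRel k A N)))

def genL (i j : Fin N) : A →ₗ[k] RepAlg k A N where
  toFun a := Ideal.Quotient.mkₐ k (Ideal.span (repRel k A N)) (X (a, i, j))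
  map_add' a b := by
    have h : (X (a + b, i, j) - (X (a, i, j) + X (b, i, j)) : MvPolynomial (A × Fin N × Fin N) k)
        ∈ Ideal.span (repRel k A N) :=
      Ideal.subset_span (Or.inl ⟨a, b, i, j, by ring⟩)
    show Ideal.Quotient.mkₐ k _ (X (a + b, i, j)) =
      Ideal.Quotient.mkₐ k _ (X (a, i, j)) + Ideal.Quotient.mkₐ k _ (X (b, i, j))
    exact (Ideal.Quotient.eq.mpr h).trans (map_add (Ideal.Quotient.mk _) _ _)
  map_smul' c a := by
    have h : (X (c • a, i, j) - MvPolynomial.C c * X (a, i, j) :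
        MvPolynomial (A × Fin N × Fin N) k) ∈ Ideal.span (repRel k A N) :=
      Ideal.subset_span (Or.inr (Or.inl ⟨c, a, i, j, by ring⟩))
    show Ideal.Quotient.mkₐ k _ (X (c • a, i, j)) = c • Ideal.Quotient.mkₐ k _ (X (a, i, j))
    exact (Ideal.Quotient.eq.mpr h).trans
      ((congrArg (Ideal.Quotient.mk _) (MvPolynomial.smul_eq_C_mul _ c).symm).trans
        (map_smul (Ideal.Quotient.mkₐ k (Ideal.span (repRel k A N))) c _))

/-- The trace `a ↦ Σ_s a_{ss}`, as a linear map `A → O(Rep_N(A))`. -/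
def trA : A →ₗ[k] RepAlg k A N := ∑ s : Fin N, genL k A N s s

lemma genL_mul (a b : A) (i j : Fin N) :
    genL k A N i j (a * b) =
      ∑ s : Fin N, Ideal.Quotient.mk (Ideal.span (repRel k A N)) (X (a, i, s) * X (b, s, j)) := by
  have h : (X (a * b, i, j) - ∑ s : Fin N, X (a, i, s) * X (b, s, j) :
      MvPolynomial (A × Fin N × Fin N) k) ∈ Ideal.span (repRel k A N) :=
    Ideal.subset_span (Or.inr (Or.inr (Or.inl ⟨a, b, i, j, rfl⟩)))
  have h2 := Ideal.Quotient.eq.mpr h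
  exact h2.trans (map_sum _ _ _)

lemma trA_mul_comm (a b : A) : trA k A N (a * b) = trA k A N (b * a) := by
  have e1 : trA k A N (a * b) = ∑ s : Fin N, ∑ t : Fin N,
      Ideal.Quotient.mk (Ideal.span (repRel k A N)) (X (a, s, t) * X (b, t, s)) := by
    simp only [trA, LinearMap.sum_apply]
    exact Finset.sum_congr rfl fun s _ => genL_mul k A N a b s s
  have e2 : trA k A N (b * a) = ∑ s : Fin N, ∑ t : Fin N,
      Ideal.Quotient.mk (Ideal.span (repRel k A N)) (X (b, s, t) * X (a, t, s)) := by
    simp only [trA, LinearMap.sum_apply]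
    exact Finset.sum_congr rfl fun s _ => genL_mul k A N b a s s
  rw [e1, e2, Finset.sum_comm]
  exact Finset.sum_congr rfl fun s _ => Finset.sum_congr rfl fun t _ => by rw [mul_comm]

/-- The trace descends to `A_♮`. -/
def trNat : Anat k A →ₗ[k] RepAlg k A N :=
  Submodule.liftQ (commSM k A) (trA k A N) (Submodule.span_le.mpr (by
    rintro x ⟨a, b, rfl⟩
    simp only [SetLike.mem_coe, LinearMap.mem_ker, map_sub, trA_mul_comm k A N a b, sub_self]))

/-- The multiplicative extension of the trace to `Sym(A_♮)`. -/
def trSym : SymA k A →ₐ[k] RepAlg k A N :=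
  RingQuot.liftAlgHom k ⟨TensorAlgebra.lift k (trNat k A N), by
    rintro x y ⟨u, v, rfl, rfl⟩
    simp [mul_comm]⟩

/-- The multilinear map `a ↦ ∏_t (a_t)_{i_{u⁻¹(t)}, j_t}`. -/
def prodML {n : ℕ} (u : Equiv.Perm (Fin n)) (i j : Fin n → Fin N) :
    MultilinearMap k (fun _ : Fin n => A) (RepAlg k A N) :=
  (MultilinearMap.mkPiAlgebra k (Fin n) (RepAlg k A N)).compLinearMap
    (fun t => genL k A N (i (u⁻¹ t)) (j t))

/-- The pairing `α ↦ α_{ij} : O(A)^{(n)} → O(Rep_N(A))`,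
`((a_1⊗…⊗a_n)⊗(f_1⋯f_m)⊗u)_{ij} = ∏_t (a_t)_{i_{u⁻¹(t)} j_t} · tr(f_1)⋯tr(f_m)`. -/
def pairRep {n : ℕ} (i j : Fin n → Fin N) : OO k A n →ₗ[k] RepAlg k A N :=
  build k A (fun u =>
    TensorProduct.lift
      ((LinearMap.mul k (RepAlg k A N)).compl₁₂
        (PiTensorProduct.lift (prodML k A N u i j)) (trSym k A N).toLinearMap))

/-- The subspace `R_N(A) ⊆ O(A)^{(n)}` of elements vanishing in the `N`-dimensional
representations. -/
def RN (n : ℕ) : Submodule k (OO k A n) :=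
  ⨅ (i : Fin n → Fin N) (j : Fin n → Fin N), LinearMap.ker (pairRep k A N i j)

end

/-!
Both sides are linear in `α`, so it suffices to compare them on `α = (a_1 ⊗ ⋯ ⊗ a_n) ⊗ f ⊗ u`,
where `α_{(s,i),(s,j)} = ∏_t (a_t)_{I_{u⁻¹(t)} J_t}` with `I = (s,i)`, `J = (s,j)`.
If `u(1) = 1`, the index `s` occurs only in the factor `(a_1)_{ss}`, and summing over `s`
gives `tr(ā_1)`, the factor that `π` moves into `Sym(A_♮)`. If `u(1) = r > 1`, the index `s`
occurs exactly in `(a_1)_{I_{u⁻¹(1)} s}` and `(a_r)_{s J_r}`, and the relation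
`(ab)_{ij} = Σ_s a_{is} b_{sj}` turns their sum into the entry of `a_1 a_r` that `π` produces.
In both cases the remaining factors agree because `(u_*)⁻¹ = (u⁻¹)_*`.
-/

open TensorProduct PiTensorProduct Equiv Function

section TensorPowers

variable (k : Type*) [Field k]

lemma splitFirst_tprod (M : Type*) [AddCommGroup M] [Module k M] {n : ℕ} (a : Fin (n+1) → M) :
    splitFirst k M n (tprod k a) = a 0 ⊗ₜ[k] tprod k (Fin.tail a) := by
  simp only [splitFirst, LinearEquiv.trans_apply, reindex_tprod]
  rw [show (fun t => a ((finSumFinEquiv.trans (finCongr (by omega : 1 + n = n + 1))).symm.symm t)) =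
      Sum.elim (fun _ : Fin 1 => a 0) (Fin.tail a) from ?_]
  · rw [tmulEquiv_symm_apply]
    simp [TensorProduct.congr]
  · funext t
    rcases t with x | x
    · simp only [Fin.fin_one_eq_zero x, finSumFinEquiv, Sum.elim_inl]
      rfl
    · simp [finSumFinEquiv, Fin.tail]

lemma splitFirst_symm_tmul (M : Type*) [AddCommGroup M] [Module k M] {n : ℕ} (x : M)
    (g : Fin n → M) :
    (splitFirst k M n).symm (x ⊗ₜ[k] tprod k g) = PiTensorProduct.tprod k (Fin.cons x g) := by
  rw [LinearEquiv.symm_apply_eq, splitFirst_tprod, Fin.cons_zero, Fin.tail_cons]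

variable (A : Type*) [Ring A] [Algebra k A]

lemma mulInto_tprod {n : ℕ} (s : Fin n) (a₀ : A) (b : Fin n → A) :
    mulInto k A s (a₀ ⊗ₜ[k] tprod k b) = tprod k (update b s (a₀ * b s)) := by
  cases n with
  | zero => exact s.elim0
  | succ m =>
    simp only [mulInto, LinearMap.comp_apply, LinearMap.lTensor_tmul, LinearEquiv.coe_coe,
      LinearEquiv.trans_apply, reindex_tprod, splitFirst_tprod, assoc_symm_tmul,
      LinearMap.rTensor_tmul, LinearMap.mul'_apply, splitFirst_symm_tmul]
    congr 1
    funext t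
    obtain ⟨y, rfl⟩ := (Fin.cycleRange s).symm.surjective t
    rw [show (Equiv.symm (Fin.cycleRange s)⁻¹) = Fin.cycleRange s from rfl, apply_symm_apply]
    cases y using Fin.cases <;> simp [Fin.tail]

end TensorPowers

section Permutations

variable {n : ℕ}

lemma succ_projSucc_apply_of_ne (u : Perm (Fin (n+1))) (t : Fin n) (h : u t.succ ≠ 0) :
    (projSucc u t).succ = u t.succ := by
  obtain ⟨p, hp⟩ := Fin.exists_succ_eq.mpr h
  have hv : ((finSuccEquiv n).symm.trans u).trans (finSuccEquiv n) (some t) = some p := by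
    simp [← hp]
  have := removeNone_some _ ⟨_, hv⟩
  rw [hv, Option.some_inj] at this
  rw [projSucc, this, hp]

lemma succ_projSucc_apply_of_eq (u : Perm (Fin (n+1))) (t : Fin n) (h : u t.succ = 0) :
    (projSucc u t).succ = u 0 := by
  have h0 : u 0 ≠ 0 := fun h0 => Fin.succ_ne_zero t (u.injective (h.trans h0.symm))
  have hv : ((finSuccEquiv n).symm.trans u).trans (finSuccEquiv n) (some t) = none := by
    simp [h]
  obtain ⟨p, hp⟩ := Fin.exists_succ_eq.mpr h0
  have := removeNone_none _ hv
  rw [show ((finSuccEquiv n).symm.trans u).trans (finSuccEquiv n) none = some p by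
    simp [← hp], Option.some_inj] at this
  rw [projSucc, this, hp]

lemma projSucc_inv (u : Perm (Fin (n+1))) : (projSucc u)⁻¹ = projSucc u⁻¹ := by
  rw [Perm.inv_def, projSucc, removeNone_symm]
  rfl

lemma cons_apply_perm_succ {α : Type*} (s : α) (i : Fin n → α) (w : Perm (Fin (n+1)))
    (t : Fin n) (h : w t.succ ≠ 0) :
    (Fin.cons s i : Fin (n+1) → α) (w t.succ) = i (projSucc w t) := by
  rw [← succ_projSucc_apply_of_ne w t h, Fin.cons_succ]

end Permutations

section Pairing

variable (k : Type*) [Field k] (A : Type*) [Ring A] [Algebra k A]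

lemma build_el {n : ℕ} {M : Type*} [AddCommMonoid M] [Module k M]
    (F : Perm (Fin n) → ((TP k A n ⊗[k] SymA k A) →ₗ[k] M)) (a : Fin n → A) (f : SymA k A)
    (u : Perm (Fin n)) :
    build k A F (el k A a f u) = F u (tprod k a ⊗ₜ[k] f) := by
  simp [build, el]

lemma withPerm_tprod_tmul {n : ℕ} (a : Fin n → A) (f : SymA k A) (u : Perm (Fin n)) :
    withPerm k A u (tprod k a ⊗ₜ[k] f) = el k A a f u :=
  rfl

lemma OO_linearMap_ext {n : ℕ} {M : Type*} [AddCommMonoid M] [Module k M]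
    {φ ψ : OO k A n →ₗ[k] M} (h : ∀ a f u, φ (el k A a f u) = ψ (el k A a f u)) : φ = ψ := by
  ext a f u
  exact h a f u

lemma piMap_el_of_eq_zero {n : ℕ} (a : Fin (n+1) → A) (f : SymA k A) {u : Perm (Fin (n+1))}
    (h : u 0 = 0) :
    piMap k A (el k A a f u) =
      el k A (Fin.tail a) (iotaSym k A (qNat k A (a 0)) * f) (projSucc u) := by
  simp only [piMap, piCaseOne, mulSym, build_el, h, ↓reduceDIte, LinearMap.coe_comp,
    LinearEquiv.coe_coe, comp_apply, LinearMap.rTensor_tmul, splitFirst_tprod, assoc_tmul,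
    leftComm_tmul, LinearMap.lTensor_tmul, LinearMap.mul'_apply, withPerm_tprod_tmul]

lemma piMap_el_of_ne_zero {n : ℕ} (a : Fin (n+1) → A) (f : SymA k A) {u : Perm (Fin (n+1))}
    (h : u 0 ≠ 0) :
    piMap k A (el k A a f u) =
      el k A (update (Fin.tail a) ((u 0).pred h) (a 0 * a (u 0))) f (projSucc u) := by
  simp only [piMap, piCaseTwo, build_el, h, ↓reduceDIte, LinearMap.coe_comp, comp_apply,
    LinearMap.rTensor_tmul, LinearEquiv.coe_coe, splitFirst_tprod, mulInto_tprod, Fin.tail,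
    Fin.succ_pred, withPerm_tprod_tmul]

variable (N : ℕ)

lemma genL_mul_eq_sum (a b : A) (i j : Fin N) :
    genL k A N i j (a * b) = ∑ s : Fin N, genL k A N i s a * genL k A N s j b := by
  simp only [genL_mul, _root_.map_mul]
  rfl

lemma trSym_iotaSym_qNat (a : A) :
    trSym k A N (iotaSym k A (qNat k A a)) = ∑ s : Fin N, genL k A N s s a := by
  simp [trSym, iotaSym, RingQuot.liftAlgHom_mkAlgHom_apply, trNat, qNat, trA]

lemma pairRep_el {n : ℕ} (i j : Fin n → Fin N) (a : Fin n → A) (f : SymA k A)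
    (u : Perm (Fin n)) :
    pairRep k A N i j (el k A a f u) =
      (∏ t, genL k A N (i (u⁻¹ t)) (j t) (a t)) * trSym k A N f := by
  simp [pairRep, build_el, prodML]

end Pairing

section PiMapPairing

variable (k : Type*) [Field k] (A : Type*) [Ring A] [Algebra k A] (N : ℕ) {n : ℕ}

lemma pairRep_piMap_el_of_eq_zero (i j : Fin n → Fin N) (a : Fin (n+1) → A) (f : SymA k A)
    {u : Perm (Fin (n+1))} (h : u 0 = 0) :
    pairRep k A N i j (piMap k A (el k A a f u)) =
      ∑ s : Fin N, pairRep k A N (Fin.cons s i) (Fin.cons s j) (el k A a f u) := by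
  have hinv : u⁻¹ 0 = 0 := Perm.inv_eq_iff_eq.mpr h.symm
  have hne (t : Fin n) : u⁻¹ t.succ ≠ 0 := fun ht =>
    Fin.succ_ne_zero t (u⁻¹.injective (ht.trans hinv.symm))
  simp only [piMap_el_of_eq_zero k A a f h, pairRep_el, _root_.map_mul, trSym_iotaSym_qNat,
    Fin.prod_univ_succ, hinv, Fin.cons_zero, Fin.cons_succ, cons_apply_perm_succ _ _ _ _ (hne _),
    projSucc_inv, Finset.sum_mul, Finset.mul_sum, Fin.tail]
  exact Finset.sum_congr rfl fun s _ => by ring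

lemma pairRep_piMap_el_of_ne_zero (i j : Fin n → Fin N) (a : Fin (n+1) → A) (f : SymA k A)
    {u : Perm (Fin (n+1))} (h : u 0 ≠ 0) :
    pairRep k A N i j (piMap k A (el k A a f u)) =
      ∑ s : Fin N, pairRep k A N (Fin.cons s i) (Fin.cons s j) (el k A a f u) := by
  set p := (u 0).pred h
  have hp : p.succ = u 0 := Fin.succ_pred _ h
  obtain ⟨q, hq⟩ := Fin.exists_succ_eq.mpr fun h' => h (Perm.inv_eq_iff_eq.mp h').symm
  have hup : u⁻¹ p.succ = 0 := Perm.inv_eq_iff_eq.mpr hp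
  have hpq : projSucc u⁻¹ p = q :=
    Fin.succ_injective _ (by rw [succ_projSucc_apply_of_eq _ _ hup, hq])
  set C := ∏ t ∈ Finset.univ.erase p, genL k A N (i (projSucc u⁻¹ t)) (j t) (a t.succ)
  have hL : ∏ t, genL k A N (i (projSucc u⁻¹ t)) (j t) (update (Fin.tail a) p (a 0 * a (u 0)) t)
      = genL k A N (i q) (j p) (a 0 * a (u 0)) * C := by
    rw [← Finset.mul_prod_erase _ _ (Finset.mem_univ p), hpq, update_self]
    exact congrArg _ (Finset.prod_congr rfl fun t ht => by
      rw [update_of_ne (Finset.ne_of_mem_erase ht)]; rfl)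
  have hR (s : Fin N) :
      ∏ t : Fin n, genL k A N ((Fin.cons s i : Fin (n+1) → Fin N) (u⁻¹ t.succ)) (j t) (a t.succ) =
        genL k A N s (j p) (a (u 0)) * C := by
    rw [← Finset.mul_prod_erase _ _ (Finset.mem_univ p), hup, Fin.cons_zero, hp]
    refine congrArg _ (Finset.prod_congr rfl fun t ht => ?_)
    have hne : u⁻¹ t.succ ≠ 0 := fun ht' => Finset.ne_of_mem_erase ht
      (Fin.succ_injective _ ((Perm.inv_eq_iff_eq.mp ht').trans hp.symm))
    rw [cons_apply_perm_succ _ _ _ _ hne]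
  rw [piMap_el_of_ne_zero k A a f h, pairRep_el, projSucc_inv, hL, genL_mul_eq_sum]
  simp only [pairRep_el, Fin.prod_univ_succ, ← hq, Fin.cons_succ, Fin.cons_zero, hR,
    Finset.sum_mul]
  exact Finset.sum_congr rfl fun s _ => by ring

end PiMapPairing

theorem pairRep_piMap_general (k : Type*) [Field k]
    (A : Type*) [Ring A] [Algebra k A] (N : ℕ)
    (n : ℕ) (α : OO k A (n + 1)) (i j : Fin n → Fin N) :
    pairRep k A N i j (piMap k A α) =
      ∑ s : Fin N, pairRep k A N (Fin.cons s i) (Fin.cons s j) α := by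
  have key : pairRep k A N i j ∘ₗ piMap k A =
      ∑ s : Fin N, pairRep k A N (Fin.cons s i) (Fin.cons s j) := by
    refine OO_linearMap_ext k A fun a f u => ?_
    rw [LinearMap.comp_apply, LinearMap.sum_apply]
    by_cases h : u 0 = 0
    · exact pairRep_piMap_el_of_eq_zero k A N i j a f h
    · exact pairRep_piMap_el_of_ne_zero k A N i j a f h
  simpa using LinearMap.congr_fun key α

theorem pairRep_piMap (k : Type*) [Field k] [IsAlgClosed k] [CharZero k]
    (A : Type*) [Ring A] [Algebra k A] (N : ℕ) (hN : 1 ≤ N)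
    (n : ℕ) (α : OO k A (n + 1)) (i j : Fin n → Fin N) :
    pairRep k A N i j (piMap k A α) =
      ∑ s : Fin N, pairRep k A N (Fin.cons s i) (Fin.cons s j) α :=
  pairRep_piMap_general k A N n α i j
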